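/- arXiv:2003.01346 — 4 statements merged into one kernel-verified Lean document; each statement's English description precedes it below -/
import Mathlib

section
/- Let R be a ring, G a group, and δ a derivation of R[G] whose image is contained in the center of R[G] and with δ(R) = 0. If g ∈ G has finite order n and R is n-torsion-free, then δ(g) = 0. In particular, if G is a torsion group all of whose element orders are invertible in R, then every such central R-derivation of R[G] is zero. -/
/-- A derivation of an associative ring `B`. -/
def IsDerivation {B : Type*} [Ring B] (δ : B → B) : Prop :=
  (∀ x y : B, δ (x + y) = δ x + δ y) ∧ (∀ x y : B, δ (x * y) = δ x * y + x * δ y)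

/-- Let `δ` be a derivation of `R[G]` with central image and vanishing on `R`.
If `g` has finite order `n` and `R` is `n`-torsion-free, then `δ(g) = 0`.  In
particular, if `G` is torsion with all element orders invertible in `R`, then any such
central `R`-derivation is zero. -/
theorem stmt9 {R : Type*} [Ring R] {G : Type*} [Group G]
    (δ : MonoidAlgebra R G → MonoidAlgebra R G) (hδ : IsDerivation δ)
    (hR : ∀ r : R, δ (MonoidAlgebra.single (1 : G) r) = 0)
    (hcentral : ∀ x y : MonoidAlgebra R G, δ x * y = y * δ x) :
    (∀ (g : G) (n : ℕ), 0 < n → orderOf g = n → (∀ x : R, n • x = 0 → x = 0) →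
        δ (MonoidAlgebra.of R G g) = 0) ∧
    ((∀ g : G, 0 < orderOf g ∧ IsUnit ((orderOf g : ℕ) : R)) →
        ∀ x : MonoidAlgebra R G, δ x = 0) := by
  obtain ⟨hadd, hmul⟩ := hδ
  have h0 : δ 0 = 0 := by
    have h := hadd 0 0
    rw [add_zero] at h
    simpa using h
  have h1 : δ 1 = 0 := by
    have := hR 1
    rwa [← MonoidAlgebra.one_def] at this
  -- key power formula
  have key : ∀ (g : G) (k : ℕ),
      δ (MonoidAlgebra.of R G g ^ (k + 1)) =
        (k + 1) • (MonoidAlgebra.of R G g ^ k * δ (MonoidAlgebra.of R G g)) := by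
    intro g k
    induction k with
    | zero => simp
    | succ k ih =>
      show δ (MonoidAlgebra.of R G g ^ (k + 1 + 1)) =
        (k + 1 + 1) • (MonoidAlgebra.of R G g ^ (k + 1) * δ (MonoidAlgebra.of R G g))
      rw [pow_succ, hmul, ih, smul_mul_assoc, mul_assoc,
        hcentral (MonoidAlgebra.of R G g) (MonoidAlgebra.of R G g),
        ← mul_assoc, ← pow_succ, succ_nsmul, succ_nsmul, succ_nsmul]
  have part1 : ∀ (g : G) (n : ℕ), 0 < n → orderOf g = n → (∀ x : R, n • x = 0 → x = 0) →
      δ (MonoidAlgebra.of R G g) = 0 := by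
    intro g n hn hord htf
    obtain ⟨m, rfl⟩ : ∃ m, n = m + 1 := ⟨n - 1, (Nat.succ_pred_eq_of_pos hn).symm⟩
    have hpow : (MonoidAlgebra.of R G g) ^ (m + 1) = 1 := by
      rw [← map_pow, ← hord, pow_orderOf_eq_one, map_one]
    have h2 : (m + 1) • (MonoidAlgebra.of R G g ^ m * δ (MonoidAlgebra.of R G g)) = 0 := by
      rw [← key g m, hpow, h1]
    obtain ⟨u, hu⟩ : IsUnit (MonoidAlgebra.of R G g ^ m) :=
      (Group.isUnit g).map (MonoidAlgebra.of R G) |>.pow m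
    have h3 : (m + 1) • δ (MonoidAlgebra.of R G g) = 0 := by
      calc (m + 1) • δ (MonoidAlgebra.of R G g)
          = ↑u⁻¹ * ((m + 1) • (↑u * δ (MonoidAlgebra.of R G g))) := by
            rw [mul_smul_comm, ← mul_assoc, Units.inv_mul, one_mul]
        _ = ↑u⁻¹ * ((m + 1) • (MonoidAlgebra.of R G g ^ m * δ (MonoidAlgebra.of R G g))) := by
            rw [hu]
        _ = 0 := by rw [h2, mul_zero]
    refine MonoidAlgebra.ext (Finsupp.ext fun a => htf _ ?_)
    rw [← MonoidAlgebra.coeff_smul_apply, h3, MonoidAlgebra.coeff_zero, Finsupp.zero_apply]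
  refine ⟨part1, ?_⟩
  intro h x
  have hsingle : ∀ (g : G) (r : R), δ (MonoidAlgebra.single g r) = 0 := by
    intro g r
    have htf : ∀ y : R, orderOf g • y = 0 → y = 0 := by
      intro y hy
      obtain ⟨v, hv⟩ := (h g).2
      have hmuly : ((orderOf g : ℕ) : R) * y = 0 := by rwa [← nsmul_eq_mul]
      calc y = ↑v⁻¹ * (((orderOf g : ℕ) : R) * y) := by
              rw [← hv, ← mul_assoc, Units.inv_mul, one_mul]
        _ = 0 := by rw [hmuly, mul_zero]
    have hg := part1 g (orderOf g) (h g).1 rfl htf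
    have hdecomp : MonoidAlgebra.single g r =
        MonoidAlgebra.single (1 : G) r * MonoidAlgebra.of R G g := by
      rw [MonoidAlgebra.of_apply, MonoidAlgebra.single_mul_single, one_mul, mul_one]
    rw [hdecomp, hmul, hR, hg, zero_mul, mul_zero, add_zero]
  refine MonoidAlgebra.induction x h0 ?_
  intro a b f _ _ ihf
  rw [hadd, hsingle, ihf, add_zero]
end

section
/- Let R be a ring, G a group, and H a finite subgroup of G whose order is invertible in R. For any R-derivation δ of R[G], setting x = (1/|H|)·Σ_{a∈H} a⁻¹·δ(a) ∈ R[G], one has δ(y) = yx − xy for every y ∈ R[H]. In particular, if G itself is finite with |G| invertible in R, then every R-derivation of R[G] is inner. -/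
/-- Let `H` be a finite subgroup of `G` with `|H|` invertible in `R` and `δ` an
`R`-derivation of `R[G]`.  With `x = |H|⁻¹ · Σ_{a ∈ H} a⁻¹ δ(a)`, one has
`δ(y) = y*x - x*y` for every `y ∈ R[H]` (i.e. every `y` supported on `H`). -/
theorem stmt11 {R : Type*} [Ring R] {G : Type*} [Group G]
    (H : Subgroup G) [Fintype H] (hu : IsUnit ((Fintype.card H : ℕ) : R))
    (δ : MonoidAlgebra R G → MonoidAlgebra R G) (hδ : IsDerivation δ)
    (hR : ∀ r : R, δ (MonoidAlgebra.single (1 : G) r) = 0) :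
    ∀ y : MonoidAlgebra R G, (∀ g ∈ y.coeff.support, g ∈ H) →
      δ y =
        y * (MonoidAlgebra.single (1 : G) ((↑hu.unit⁻¹ : Rˣ) : R) *
              ∑ a : H, MonoidAlgebra.of R G ((a : G)⁻¹) * δ (MonoidAlgebra.of R G (a : G)))
        - (MonoidAlgebra.single (1 : G) ((↑hu.unit⁻¹ : Rˣ) : R) *
              ∑ a : H, MonoidAlgebra.of R G ((a : G)⁻¹) * δ (MonoidAlgebra.of R G (a : G))) * y := by
  classical
  obtain ⟨hadd, hmul⟩ := hδ
  set r : R := ((hu.unit⁻¹ : Rˣ) : R) with hrdef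
  set T : MonoidAlgebra R G :=
    ∑ a : H, MonoidAlgebra.of R G ((a : G)⁻¹) * δ (MonoidAlgebra.of R G (a : G)) with hT
  set x : MonoidAlgebra R G := MonoidAlgebra.single (1 : G) r * T with hx
  -- basic facts
  have hrn : r * ((Fintype.card H : ℕ) : R) = 1 := by
    have h := hu.unit.inv_mul
    rwa [hu.unit_spec] at h
  have hrc : ∀ c : R, Commute r c := by
    intro c
    have : Commute ((hu.unit : Rˣ) : R) c := by
      rw [hu.unit_spec]; exact Nat.cast_commute _ _
    exact Commute.units_inv_left this
  -- single 1 r is central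
  have hcr : ∀ f : MonoidAlgebra R G,
      MonoidAlgebra.single (1 : G) r * f = f * MonoidAlgebra.single (1 : G) r := by
    intro f
    ext g
    rw [MonoidAlgebra.single_one_mul_apply, MonoidAlgebra.mul_single_one_apply]
    exact (hrc (f.coeff g)).eq
  -- single 1 c commutes with of g
  have hc_of : ∀ (c : R) (g : G),
      MonoidAlgebra.single (1 : G) c * MonoidAlgebra.of R G g
        = MonoidAlgebra.of R G g * MonoidAlgebra.single (1 : G) c := by
    intro c g
    simp [MonoidAlgebra.of_apply, MonoidAlgebra.single_mul_single]
  -- single 1 c commutes with δ (of g)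
  have hcomm : ∀ (c : R) (g : G),
      MonoidAlgebra.single (1 : G) c * δ (MonoidAlgebra.of R G g)
        = δ (MonoidAlgebra.of R G g) * MonoidAlgebra.single (1 : G) c := by
    intro c g
    have := congrArg δ (hc_of c g)
    rw [hmul, hmul, hR c, zero_mul, zero_add, mul_zero, add_zero] at this
    exact this
  -- single 1 c commutes with x
  have hxc : ∀ c : R, MonoidAlgebra.single (1 : G) c * x = x * MonoidAlgebra.single (1 : G) c := by
    intro c
    have hTc : MonoidAlgebra.single (1 : G) c * T = T * MonoidAlgebra.single (1 : G) c := by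
      rw [hT, Finset.mul_sum, Finset.sum_mul]
      refine Finset.sum_congr rfl fun a _ => ?_
      rw [← mul_assoc, hc_of, mul_assoc, hcomm, mul_assoc]
    rw [hx, ← mul_assoc, ← hcr, mul_assoc, hTc, ← mul_assoc]
  -- of a⁻¹ * of a = 1 and of a * of a⁻¹ = 1
  have hinv : ∀ g : G, MonoidAlgebra.of R G g⁻¹ * MonoidAlgebra.of R G g = 1 := by
    intro g; rw [← map_mul, inv_mul_cancel, map_one]
  have hinv' : ∀ g : G, MonoidAlgebra.of R G g * MonoidAlgebra.of R G g⁻¹ = 1 := by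
    intro g; rw [← map_mul, mul_inv_cancel, map_one]
  -- the key identity for group elements of H
  have hkey : ∀ b : H, δ (MonoidAlgebra.of R G (b : G))
      = MonoidAlgebra.of R G (b : G) * x - x * MonoidAlgebra.of R G (b : G) := by
    intro b
    have hre : T = ∑ a : H, MonoidAlgebra.of R G (((a * b : H) : G))⁻¹
        * δ (MonoidAlgebra.of R G ((a * b : H) : G)) :=
      (Fintype.sum_equiv (Equiv.mulRight b)
        (fun a => MonoidAlgebra.of R G (((a * b : H) : G))⁻¹
          * δ (MonoidAlgebra.of R G ((a * b : H) : G)))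
        (fun a => MonoidAlgebra.of R G ((a : G))⁻¹ * δ (MonoidAlgebra.of R G (a : G)))
        (fun a => rfl)).symm
    have hterm : ∀ a : H, MonoidAlgebra.of R G (((a * b : H) : G))⁻¹
        * δ (MonoidAlgebra.of R G ((a * b : H) : G))
        = MonoidAlgebra.of R G ((b : G))⁻¹
            * (MonoidAlgebra.of R G ((a : G))⁻¹ * δ (MonoidAlgebra.of R G (a : G)))
            * MonoidAlgebra.of R G (b : G)
          + MonoidAlgebra.of R G ((b : G))⁻¹ * δ (MonoidAlgebra.of R G (b : G)) := by
      intro a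
      have hcmul : ((a * b : H) : G) = (a : G) * (b : G) := rfl
      rw [hcmul, mul_inv_rev, map_mul, map_mul, hmul, mul_add]
      congr 1
      · simp only [mul_assoc]
      · simp only [mul_assoc]
        rw [← mul_assoc (MonoidAlgebra.of R G ((a : G))⁻¹), hinv, one_mul]
    have hTsum : T = MonoidAlgebra.of R G ((b : G))⁻¹ * T * MonoidAlgebra.of R G (b : G)
        + (Fintype.card H) • (MonoidAlgebra.of R G ((b : G))⁻¹ * δ (MonoidAlgebra.of R G (b : G))) := by
      conv_lhs => rw [hre]
      simp_rw [hterm]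
      rw [Finset.sum_add_distrib, Finset.sum_const, Finset.card_univ]
      congr 1
      conv_rhs => rw [hT, Finset.mul_sum, Finset.sum_mul]
    have hsmul : (Fintype.card H) • δ (MonoidAlgebra.of R G (b : G))
        = MonoidAlgebra.of R G (b : G) * T - T * MonoidAlgebra.of R G (b : G) := by
      have := congrArg (fun z => MonoidAlgebra.of R G (b : G) * z) hTsum
      simp only [mul_add, ← mul_assoc, hinv' (b : G), one_mul, mul_smul_comm] at this
      rw [eq_sub_iff_add_eq, add_comm]
      exact this.symm
    have hone : MonoidAlgebra.single (1 : G) r * ((Fintype.card H : ℕ) : MonoidAlgebra R G) = 1 := by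
      rw [MonoidAlgebra.natCast_def, MonoidAlgebra.single_mul_single, one_mul, hrn,
        MonoidAlgebra.one_def]
    calc δ (MonoidAlgebra.of R G (b : G))
        = MonoidAlgebra.single (1 : G) r
            * ((Fintype.card H) • δ (MonoidAlgebra.of R G (b : G))) := by
          rw [nsmul_eq_mul, ← mul_assoc, hone, one_mul]
      _ = MonoidAlgebra.of R G (b : G) * x - x * MonoidAlgebra.of R G (b : G) := by
          rw [hsmul, mul_sub, hx]
          congr 1
          · rw [← mul_assoc, hcr (MonoidAlgebra.of R G (b : G)), mul_assoc]
          · rw [← mul_assoc]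
  -- singles supported in H
  have hsingle : ∀ (g : G), g ∈ H → ∀ c : R,
      δ (MonoidAlgebra.single g c)
        = MonoidAlgebra.single g c * x - x * MonoidAlgebra.single g c := by
    intro g hg c
    have hgc : MonoidAlgebra.single g c
        = MonoidAlgebra.single (1 : G) c * MonoidAlgebra.of R G g := by
      simp [MonoidAlgebra.of_apply, MonoidAlgebra.single_mul_single]
    have hk := hkey ⟨g, hg⟩
    simp only [Subgroup.coe_mk] at hk
    rw [hgc, hmul, hR, zero_mul, zero_add, hk, mul_sub]
    congr 1
    · exact (mul_assoc _ _ _).symm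
    · rw [← mul_assoc, hxc, mul_assoc]
  -- conclude by additivity
  intro y hy
  let δ' : MonoidAlgebra R G →+ MonoidAlgebra R G := AddMonoidHom.mk' δ hadd
  have hδy : δ y = ∑ g ∈ y.coeff.support, δ (MonoidAlgebra.single g (y.coeff g)) := by
    conv_lhs => rw [← MonoidAlgebra.sum_coeff_single y, Finsupp.sum]
    exact map_sum δ' _ _
  have hyy : y = ∑ g ∈ y.coeff.support, MonoidAlgebra.single g (y.coeff g) := by
    conv_lhs => rw [← MonoidAlgebra.sum_coeff_single y, Finsupp.sum]
  rw [hδy]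
  conv_rhs => rw [hyy]
  rw [Finset.sum_mul, Finset.mul_sum, ← Finset.sum_sub_distrib]
  exact Finset.sum_congr rfl fun g hg => hsingle g (hy g hg) (y.coeff g)
end

section
/- Let R be a ring and G a finite group whose order is invertible in R. Then every R-derivation of the group ring R[G] is inner, i.e., of the form x ↦ ax − xa for some a ∈ R[G]. -/
/-- If `G` is a finite group whose order is invertible in `R`, then every
`R`-derivation of the group ring `R[G]` is inner. -/
theorem stmt12 {R : Type*} [Ring R] {G : Type*} [Group G] [Fintype G]
    (hu : IsUnit ((Fintype.card G : ℕ) : R))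
    (δ : MonoidAlgebra R G → MonoidAlgebra R G) (hδ : IsDerivation δ)
    (hR : ∀ r : R, δ (MonoidAlgebra.single (1 : G) r) = 0) :
    ∃ a : MonoidAlgebra R G, ∀ x : MonoidAlgebra R G, δ x = a * x - x * a := by
  classical
  obtain ⟨hadd, hmul⟩ := hδ
  set n := Fintype.card G with hn
  -- notation
  set E : G → MonoidAlgebra R G := fun g => MonoidAlgebra.single g (1 : R) with hEdef
  have hE : ∀ g h : G, E g * E h = E (g * h) := by
    intro g h; simp [hEdef, MonoidAlgebra.single_mul_single]
  have hE1 : E 1 = 1 := by simp [hEdef, MonoidAlgebra.one_def]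
  -- R-scalars commute with group elements
  have hcomm1 : ∀ (g : G) (r : R),
      MonoidAlgebra.single (1 : G) r * E g = E g * MonoidAlgebra.single (1 : G) r := by
    intro g r; simp [hEdef, MonoidAlgebra.single_mul_single]
  -- scalars commute with δ of group elements
  have hcommδ : ∀ (g : G) (r : R),
      MonoidAlgebra.single (1 : G) r * δ (E g) = δ (E g) * MonoidAlgebra.single (1 : G) r := by
    intro g r
    have h1 : δ (E g * MonoidAlgebra.single (1 : G) r)
        = δ (E g) * MonoidAlgebra.single (1 : G) r := by
      rw [hmul, hR, mul_zero, add_zero]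
    have h2 : δ (MonoidAlgebra.single (1 : G) r * E g)
        = MonoidAlgebra.single (1 : G) r * δ (E g) := by
      rw [hmul, hR, zero_mul, zero_add]
    rw [← h1, ← hcomm1, h2]
  -- the candidate element (up to sign and scaling)
  set S : MonoidAlgebra R G := ∑ g : G, E g⁻¹ * δ (E g) with hSdef
  -- key identity: E h * S - S * E h = n • δ (E h)
  have key : ∀ h : G, E h * S - S * E h = n • δ (E h) := by
    intro h
    have reindex : S = ∑ g : G, E (g * h)⁻¹ * δ (E (g * h)) := by
      rw [hSdef]
      exact (Fintype.sum_equiv (Equiv.mulRight h) _ _ (fun g => rfl)).symm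
    have expand : ∀ g : G, E (g * h)⁻¹ * δ (E (g * h))
        = E h⁻¹ * (E g⁻¹ * δ (E g)) * E h + E h⁻¹ * δ (E h) := by
      intro g
      have hd : δ (E (g * h)) = δ (E g) * E h + E g * δ (E h) := by
        rw [← hE, hmul]
      rw [hd, mul_inv_rev, ← hE]
      rw [mul_add]
      congr 1
      · noncomm_ring
      · rw [mul_assoc (E h⁻¹), ← mul_assoc (E g⁻¹), hE, inv_mul_cancel, hE1, one_mul]
    have hS2 : S = E h⁻¹ * S * E h + n • (E h⁻¹ * δ (E h)) := by
      calc S = ∑ g : G, (E h⁻¹ * (E g⁻¹ * δ (E g)) * E h + E h⁻¹ * δ (E h)) := by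
              rw [reindex]; exact Finset.sum_congr rfl fun g _ => expand g
        _ = (∑ g : G, E h⁻¹ * (E g⁻¹ * δ (E g)) * E h) + n • (E h⁻¹ * δ (E h)) := by
              rw [Finset.sum_add_distrib, Finset.sum_const, Finset.card_univ]
        _ = E h⁻¹ * S * E h + n • (E h⁻¹ * δ (E h)) := by
              rw [hSdef, Finset.mul_sum, Finset.sum_mul]
    have hgoal := congrArg (fun x => E h * x) hS2
    simp only [mul_add] at hgoal
    rw [← mul_assoc, ← mul_assoc, hE, mul_inv_cancel, hE1, one_mul] at hgoal
    rw [mul_smul_comm, ← mul_assoc, hE, mul_inv_cancel, hE1, one_mul] at hgoal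
    rw [hgoal]; abel
  -- the inverse scalar
  set c : R := ((hu.unit⁻¹ : Rˣ) : R) with hcdef
  have hc_central : ∀ r : R, c * r = r * c := by
    intro r
    have h1 : Commute ((hu.unit : Rˣ) : R) r := by
      rw [IsUnit.unit_spec]; exact Nat.cast_commute n r
    exact h1.units_inv_left
  have hcn : c * ((n : ℕ) : R) = 1 := by
    have h2 := hu.unit.inv_mul
    rw [IsUnit.unit_spec] at h2
    exact h2
  set C : MonoidAlgebra R G := MonoidAlgebra.single (1 : G) c with hCdef
  have hCE : ∀ h : G, C * E h = E h * C := fun h => by rw [hCdef]; exact hcomm1 h c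
  -- C commutes with S
  have hCS : C * S = S * C := by
    rw [hSdef, Finset.mul_sum, Finset.sum_mul]
    refine Finset.sum_congr rfl fun g _ => ?_
    rw [← mul_assoc, hCdef, hcomm1, mul_assoc, hcommδ, mul_assoc]
  -- natCast as single
  have hnat : ((n : ℕ) : MonoidAlgebra R G) = MonoidAlgebra.single (1 : G) ((n : ℕ) : R) := by
    rw [← map_natCast (MonoidAlgebra.singleOneRingHom (R := R) (M := G)) n]
    rfl
  -- C * (n • x) = x
  have hCn : ∀ x : MonoidAlgebra R G, C * (n • x) = x := by
    intro x
    rw [nsmul_eq_mul, ← mul_assoc, hnat, hCdef, MonoidAlgebra.single_mul_single, hcn,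
      mul_one, ← MonoidAlgebra.one_def, one_mul]
  -- the element a
  refine ⟨-(C * S), ?_⟩
  -- first, for group elements
  have hmain : ∀ h : G, δ (E h) = -(C * S) * E h - E h * -(C * S) := by
    intro h
    have h1 : -(C * S) * E h - E h * -(C * S) = C * (E h * S - S * E h) := by
      have h2 : C * (E h * S) = E h * (C * S) := by
        rw [← mul_assoc, hCE, mul_assoc]
      rw [mul_sub, h2, ← mul_assoc C S]
      noncomm_ring
    rw [h1, key h, hCn]
  -- δ is additive, so is the inner derivation; reduce to singles
  have hsingle : ∀ (g : G) (r : R),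
      δ (MonoidAlgebra.single g r) = -(C * S) * MonoidAlgebra.single g r
        - MonoidAlgebra.single g r * -(C * S) := by
    intro g r
    set Rr : MonoidAlgebra R G := MonoidAlgebra.single (1 : G) r with hRrdef
    have hsr : MonoidAlgebra.single g r = E g * Rr := by
      simp [hEdef, hRrdef, MonoidAlgebra.single_mul_single]
    have hδs : δ (MonoidAlgebra.single g r) = δ (E g) * Rr := by
      rw [hsr, hmul, hRrdef, hR, mul_zero, add_zero]
    -- Rr commutes with a = -(C*S)
    have hRrS : Rr * S = S * Rr := by
      rw [hSdef, Finset.mul_sum, Finset.sum_mul]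
      refine Finset.sum_congr rfl fun k _ => ?_
      rw [← mul_assoc, hRrdef, hcomm1, mul_assoc, hcommδ, mul_assoc]
    have hRrC : Rr * C = C * Rr := by
      rw [hRrdef, hCdef, MonoidAlgebra.single_mul_single, MonoidAlgebra.single_mul_single,
        one_mul, hc_central]
    have hRra : Rr * (C * S) = (C * S) * Rr := by
      rw [← mul_assoc, hRrC, mul_assoc, hRrS, mul_assoc]
    have hRrE : Rr * E g = E g * Rr := hcomm1 g r
    rw [hδs, hmain g, hsr]
    rw [sub_mul]
    have h3 : -(C * S) * Rr = Rr * -(C * S) := by rw [neg_mul, ← hRra, mul_neg]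
    rw [mul_assoc (E g) (-(C * S)) Rr, h3, ← mul_assoc (E g) Rr, mul_assoc (-(C * S))]
  -- general element
  intro x
  have hx : x = ∑ g ∈ x.coeff.support, MonoidAlgebra.single g (x.coeff g) := by
    conv_lhs => rw [← MonoidAlgebra.sum_coeff_single x]
    rfl
  set a : MonoidAlgebra R G := -(C * S) with hadef
  have δ' : MonoidAlgebra R G →+ MonoidAlgebra R G := AddMonoidHom.mk' δ hadd
  calc δ x = δ (∑ g ∈ x.coeff.support, MonoidAlgebra.single g (x.coeff g)) := by rw [← hx]
    _ = ∑ g ∈ x.coeff.support, δ (MonoidAlgebra.single g (x.coeff g)) :=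
        map_sum (AddMonoidHom.mk' δ hadd) _ _
    _ = ∑ g ∈ x.coeff.support,
        (a * MonoidAlgebra.single g (x.coeff g) - MonoidAlgebra.single g (x.coeff g) * a) :=
        Finset.sum_congr rfl fun g _ => hsingle g (x.coeff g)
    _ = a * x - x * a := by
        rw [Finset.sum_sub_distrib, ← Finset.mul_sum, ← Finset.sum_mul, ← hx]
end

section
/- Let R be a ring and G a group, and let g ∈ G have finite order n with n invertible in R. Let δ be a derivation of R[G] and write δ(g) = Σ_{h∈G} α_{g,h}·h. If t ∈ G commutes with g, then α_{g,t} = 0. In particular, if G is a torsion group with all element orders invertible in R, then δ(z) = 0 for every central element z of G. -/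
theorem isDerivation_one {B : Type*} [Ring B] {δ : B → B} (hδ : IsDerivation δ) : δ 1 = 0 := by
  have h := hδ.2 1 1
  simp only [one_mul, mul_one] at h
  exact add_eq_left.mp h.symm

theorem isDerivation_pow_eq {B : Type*} [Ring B] {δ : B → B} (hδ : IsDerivation δ) (x : B) :
    ∀ n : ℕ, δ (x ^ n) = ∑ i ∈ Finset.range n, x ^ i * δ x * x ^ (n - 1 - i)
  | 0 => by simpa using isDerivation_one hδ
  | (n+1) => by
    rw [pow_succ', hδ.2, isDerivation_pow_eq hδ x n, Finset.mul_sum, Finset.sum_range_succ']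
    simp only [pow_zero, one_mul, Nat.add_sub_cancel, Nat.succ_sub_one]
    rw [add_comm]
    congr 1
    refine Finset.sum_congr rfl fun i hi => ?_
    rw [← mul_assoc, ← mul_assoc, ← pow_succ']
    congr 2
    omega

/-- Let `δ` be a derivation of `R[G]`.  If `g` has finite order `n` with `n`
invertible in `R` and `t` commutes with `g`, then the coefficient of `t` in `δ(g)` is
zero.  In particular, if `G` is torsion with all element orders invertible in `R`,
then `δ(z) = 0` for every central element `z` of `G`. -/
theorem stmt14 {R : Type*} [Ring R] {G : Type*} [Group G]
    (δ : MonoidAlgebra R G → MonoidAlgebra R G) (hδ : IsDerivation δ) :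
    (∀ (g t : G) (n : ℕ), 0 < n → orderOf g = n → IsUnit ((n : ℕ) : R) →
        Commute g t → (δ (MonoidAlgebra.of R G g)).coeff t = 0) ∧
    ((∀ g : G, 0 < orderOf g ∧ IsUnit ((orderOf g : ℕ) : R)) →
        ∀ z ∈ Subgroup.center G, δ (MonoidAlgebra.of R G z) = 0) := by
  have key : ∀ (g t : G) (n : ℕ), 0 < n → orderOf g = n → IsUnit ((n : ℕ) : R) →
      Commute g t → (δ (MonoidAlgebra.of R G g)).coeff t = 0 := by
    intro g t n hn ho hu hc
    set f := δ (MonoidAlgebra.of R G g) with hf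
    have hpow : (MonoidAlgebra.of R G g : MonoidAlgebra R G) ^ n = 1 := by
      rw [← map_pow, ← ho, pow_orderOf_eq_one, map_one]
    have h0 : (0 : MonoidAlgebra R G) = ∑ i ∈ Finset.range n,
        (MonoidAlgebra.of R G g : MonoidAlgebra R G) ^ i * f
          * (MonoidAlgebra.of R G g : MonoidAlgebra R G) ^ (n - 1 - i) := by
      rw [← isDerivation_pow_eq hδ, hpow, isDerivation_one hδ]
    have h1 := congrArg (fun x : MonoidAlgebra R G => x.coeff (t * g ^ (n-1))) h0
    simp only [MonoidAlgebra.coeff_zero, MonoidAlgebra.coeff_sum, Finsupp.coe_zero, Pi.zero_apply] at h1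
    rw [Finset.sum_apply'] at h1
    have hterm : ∀ i ∈ Finset.range n,
        ((MonoidAlgebra.of R G g : MonoidAlgebra R G) ^ i * f
          * (MonoidAlgebra.of R G g : MonoidAlgebra R G) ^ (n - 1 - i)).coeff (t * g ^ (n-1))
          = f.coeff t := by
      intro i hi
      rw [← map_pow, ← map_pow, MonoidAlgebra.of_apply, MonoidAlgebra.of_apply,
        MonoidAlgebra.coeff_mul_single_apply, MonoidAlgebra.coeff_single_mul_apply, one_mul, mul_one]
      congr 1
      have hsplit : g ^ (n-1) = g ^ i * g ^ (n-1-i) := by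
        rw [← pow_add]
        congr 1
        simp at hi
        omega
      have hc2 : (g ^ i)⁻¹ * t = t * (g ^ i)⁻¹ := ((hc.pow_left i).inv_left).eq
      rw [hsplit, ← mul_assoc, ← mul_assoc, hc2]
      group
    rw [Finset.sum_congr rfl hterm, Finset.sum_const, Finset.card_range] at h1
    have hmul : ((n : ℕ) : R) * f.coeff t = 0 := by rw [← nsmul_eq_mul, ← h1]
    exact (IsUnit.mul_right_eq_zero hu).mp hmul
  refine ⟨key, fun htor z hz => ?_⟩
  ext t
  simp only [MonoidAlgebra.coeff_zero, Finsupp.coe_zero, Pi.zero_apply]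
  exact key z t (orderOf z) (htor z).1 rfl (htor z).2 (Subgroup.mem_center_iff.mp hz t).symm
end
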